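/- arXiv:1709.07737 — 2 statements merged into one kernel-verified Lean document; each statement's English description precedes it below -/
import Mathlib

section
/- Let p > 0 and let h : (0,∞) → ℝ be C¹, positive, decreasing, integrable on (0,1), with lim_{y→∞} h(y) = h_∞ finite. Then: (i) lim_{y→0} y h(y) = 0; (ii) for all y > 0, (1/p)(Aξ_p)(y) = ∫_y^∞ p h(y')/(p + y')² dy' + y h(y)/(p + y); (iii) Aξ_p is positive and bounded on (0,∞), and lim_{y→0} (Aξ_p)(y) exists and is finite; (iv) B(Aξ_p)(y) = (1/p)(Aξ_p)(y) − y h'(y) for all y > 0, and consequently B(Aξ_p)(y) ≥ 0 for all y > 0. -/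
open MeasureTheory Real Filter Set

/-- The operator (Aζ)(y) = ζ(y) − yζ'(y). -/
noncomputable def opA (ζ : ℝ → ℝ) : ℝ → ℝ := fun y => ζ y - y * deriv ζ y

/-- The operator (Bζ)(y) = (1/p)ζ(y) − (1 + y/p)ζ'(y). -/
noncomputable def opB (p : ℝ) (ζ : ℝ → ℝ) : ℝ → ℝ :=
  fun y => (1 / p) * ζ y - (1 + y / p) * deriv ζ y

/-- The equilibrium profile ξ_p(y) = (p+y)∫_y^∞ p h(y')/(p+y')² dy'. -/
noncomputable def xiP (p : ℝ) (h : ℝ → ℝ) : ℝ → ℝ :=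
  fun y => (p + y) * ∫ y' in Set.Ioi y, p * h y' / (p + y') ^ 2

/-!
Writing `G(y) = ∫_y^∞ p h(t)/(p+t)² dt`, so that `ξ_p = (p + y) G`, one has
`G' = -p h/(p+y)²` and hence `Aξ_p = p (G + y h/(p+y))`. Differentiating once more, the
terms in `h` cancel and `(Aξ_p)' = p y h'/(p+y)`, which gives the formula for `B(Aξ_p)` and
its sign, as `h' ≤ 0`. Since `h` is decreasing, `y h(y) ≤ ∫_0^y h`, so `y h(y) → 0` at `0`;
together with the integrability of the integrand of `G` on `(0, ∞)` this gives boundedness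
of `Aξ_p` and its limit `p G(0)` at `0`.
-/

open Topology

section TailIntegral

variable {E : Type*} [NormedAddCommGroup E] [NormedSpace ℝ E] {F : ℝ → E} {a b : ℝ}

theorem tendsto_intervalIntegral_nhdsGT (hF : IntegrableOn F (Ioc a b)) (hab : a < b) :
    Tendsto (fun y => ∫ t in a..y, F t) (𝓝[>] a) (𝓝 0) := by
  have hcont := intervalIntegral.continuousOn_primitive_interval (f := F) (μ := volume)
    (by rwa [uIcc_of_le hab.le, integrableOn_Icc_iff_integrableOn_Ioc]) a left_mem_uIcc
  rw [uIcc_of_le hab.le] at hcont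
  simpa using hcont.tendsto.mono_left (nhdsWithin_le_of_mem (Icc_mem_nhdsGT hab))

theorem tendsto_setIntegral_Ioi_nhdsGT (hF : IntegrableOn F (Ioi a)) :
    Tendsto (fun y => ∫ t in Ioi y, F t) (𝓝[>] a) (𝓝 (∫ t in Ioi a, F t)) := by
  have hprim := tendsto_intervalIntegral_nhdsGT (hF.mono_set Ioc_subset_Ioi_self) (lt_add_one a)
  have := (tendsto_const_nhds (x := ∫ t in Ioi a, F t)).sub hprim
  rw [sub_zero] at this
  refine this.congr' ?_
  filter_upwards [self_mem_nhdsWithin] with y hy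
  rw [← intervalIntegral.integral_Ioi_sub_Ioi hF (le_of_lt hy), sub_sub_cancel]

theorem hasDerivAt_setIntegral_Ioi [CompleteSpace E] (hF : IntegrableOn F (Ioi a)) {y : ℝ}
    (hy : a < y) (hc : ContinuousAt F y) :
    HasDerivAt (fun u => ∫ t in Ioi u, F t) (-F y) y := by
  have hprim : HasDerivAt (fun u => ∫ t in a..u, F t) (F y) y :=
    intervalIntegral.integral_hasDerivAt_right
      ((intervalIntegrable_iff_integrableOn_Ioc_of_le hy.le).2 (hF.mono_set Ioc_subset_Ioi_self))
      (AEStronglyMeasurable.stronglyMeasurableAtFilter_of_mem hF.aestronglyMeasurable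
        (Ioi_mem_nhds hy)) hc
  refine (hprim.const_sub (∫ t in Ioi a, F t)).congr_of_eventuallyEq ?_
  filter_upwards [Ioi_mem_nhds hy] with u hu
  rw [← intervalIntegral.integral_Ioi_sub_Ioi hF (le_of_lt hu), sub_sub_cancel]

end TailIntegral

section Antitone

variable {h : ℝ → ℝ}

theorem AntitoneOn.sub_mul_le_intervalIntegral {a b : ℝ} (hdec : AntitoneOn h (Ioc a b))
    (hint : IntervalIntegrable h volume a b) (hab : a < b) :
    (b - a) * h b ≤ ∫ t in a..b, h t := by
  simpa using intervalIntegral.integral_mono_on_of_le_Ioo hab.le intervalIntegrable_const hint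
    fun t ht => hdec ⟨ht.1, ht.2.le⟩ ⟨hab, le_rfl⟩ ht.2.le

theorem AntitoneOn.deriv_nonpos_of_mem_nhds {s : Set ℝ} {x : ℝ} (hdec : AntitoneOn h s)
    (hs : s ∈ 𝓝 x) : deriv h x ≤ 0 := by
  rw [← derivWithin_of_mem_nhds hs]
  exact hdec.derivWithin_nonpos

theorem AntitoneOn.tendsto_mul_nhdsGT_zero (hdec : AntitoneOn h (Ioi 0))
    (hnn : ∀ y > 0, 0 ≤ h y) (hint : IntegrableOn h (Ioo 0 1)) :
    Tendsto (fun y => y * h y) (𝓝[>] 0) (𝓝 0) := by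
  have hint' : IntegrableOn h (Ioc 0 1) := (integrableOn_Ioc_iff_integrableOn_Ioo).2 hint
  refine squeeze_zero' ?_ ?_ (tendsto_intervalIntegral_nhdsGT hint' one_pos)
  · filter_upwards [self_mem_nhdsWithin] with y hy
    exact mul_nonneg (le_of_lt hy) (hnn y hy)
  · filter_upwards [Ioo_mem_nhdsGT one_pos] with y hy
    simpa using (hdec.mono Ioc_subset_Ioi_self).sub_mul_le_intervalIntegral
      ((intervalIntegrable_iff_integrableOn_Ioc_of_le hy.1.le).2
        (hint'.mono_set (Ioc_subset_Ioc_right hy.2.le))) hy.1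

end Antitone

section Profile

variable {p : ℝ} {h : ℝ → ℝ}

noncomputable def tailIntegral (p : ℝ) (h : ℝ → ℝ) (y : ℝ) : ℝ :=
  ∫ t in Ioi y, p * h t / (p + t) ^ 2

theorem integrableOn_Ioi_tailIntegrand (hp : 0 < p) (hc : ContinuousOn h (Ioi 0))
    (hnn : ∀ y > 0, 0 ≤ h y) (hdec : AntitoneOn h (Ioi 0)) (hint : IntegrableOn h (Ioo 0 1)) :
    IntegrableOn (fun t => p * h t / (p + t) ^ 2) (Ioi 0) := by
  have hmeas : ∀ s ⊆ Ioi (0 : ℝ), MeasurableSet s →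
      AEStronglyMeasurable (fun t => p * h t / (p + t) ^ 2) (volume.restrict s) := fun s hs hsm =>
    (((continuousOn_const.mul hc).div (by fun_prop)
      fun t ht => by have : (0 : ℝ) < t := ht; positivity).mono hs).aestronglyMeasurable hsm
  rw [← Ioc_union_Ioi_eq_Ioi zero_le_one]
  refine IntegrableOn.union ?_ ?_
  · refine Integrable.mono' (((integrableOn_Ioc_iff_integrableOn_Ioo).2 hint).div_const p)
      (hmeas _ Ioc_subset_Ioi_self measurableSet_Ioc) (ae_restrict_of_forall_mem measurableSet_Ioc
        fun t ht => ?_)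
    have := hnn t ht.1
    rw [norm_of_nonneg (by positivity)]
    calc p * h t / (p + t) ^ 2 ≤ p * h t / p ^ 2 := by gcongr; linarith [ht.1]
      _ = h t / p := by field_simp
  · refine Integrable.mono' ((integrableOn_Ioi_rpow_of_lt (by norm_num : (-2 : ℝ) < -1)
      one_pos).const_mul (p * h 1)) (hmeas _ (Ioi_subset_Ioi zero_le_one) measurableSet_Ioi)
      (ae_restrict_of_forall_mem measurableSet_Ioi fun t ht => ?_)
    have ht0 : (0 : ℝ) < t := one_pos.trans ht
    have := hnn t ht0
    have := hnn 1 one_pos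
    have hle : h t ≤ h 1 := hdec (by norm_num : (0 : ℝ) < 1) ht0 ht.le
    rw [norm_of_nonneg (by positivity), rpow_neg ht0.le, rpow_two, ← div_eq_mul_inv]
    calc p * h t / (p + t) ^ 2 ≤ p * h 1 / (p + t) ^ 2 := by gcongr
      _ ≤ p * h 1 / t ^ 2 := by gcongr; linarith

theorem tailIntegral_nonneg (hp : 0 < p) (hnn : ∀ y > 0, 0 ≤ h y) {y : ℝ} (hy : 0 ≤ y) :
    0 ≤ tailIntegral p h y :=
  setIntegral_nonneg measurableSet_Ioi fun t ht => by
    have := hnn t (hy.trans_lt ht)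
    have : 0 < p + t := by linarith [hy.trans_lt ht]
    positivity

theorem tailIntegral_le_tailIntegral_zero (hp : 0 < p) (hnn : ∀ y > 0, 0 ≤ h y)
    (hf : IntegrableOn (fun t => p * h t / (p + t) ^ 2) (Ioi 0)) {y : ℝ} (hy : 0 ≤ y) :
    tailIntegral p h y ≤ tailIntegral p h 0 :=
  setIntegral_mono_set hf (ae_restrict_of_forall_mem measurableSet_Ioi fun t (ht : 0 < t) => by
    have := hnn t ht; positivity) (Ioi_subset_Ioi hy).eventuallyLE

theorem hasDerivAt_tailIntegral (hp : 0 < p) (hc : ContinuousOn h (Ioi 0))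
    (hf : IntegrableOn (fun t => p * h t / (p + t) ^ 2) (Ioi 0)) {y : ℝ} (hy : 0 < y) :
    HasDerivAt (tailIntegral p h) (-(p * h y / (p + y) ^ 2)) y :=
  hasDerivAt_setIntegral_Ioi hf hy <|
    ((continuousAt_const.mul (hc.continuousAt (Ioi_mem_nhds hy))).div (by fun_prop)
      (by positivity))

theorem opA_xiP_eq (hp : 0 < p) (hc : ContinuousOn h (Ioi 0))
    (hf : IntegrableOn (fun t => p * h t / (p + t) ^ 2) (Ioi 0)) {y : ℝ} (hy : 0 < y) :
    opA (xiP p h) y = p * (tailIntegral p h y + y * h y / (p + y)) := by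
  have hxi : HasDerivAt (xiP p h) (tailIntegral p h y - p * h y / (p + y)) y := by
    have : p + y ≠ 0 := by positivity
    refine (((hasDerivAt_id' y).const_add p).mul
      (hasDerivAt_tailIntegral hp hc hf hy)).congr_deriv ?_
    field_simp
    ring
  rw [opA, hxi.deriv]
  change (p + y) * tailIntegral p h y - _ = _
  ring

theorem hasDerivAt_opA_xiP (hp : 0 < p) (hd : DifferentiableOn ℝ h (Ioi 0))
    (hf : IntegrableOn (fun t => p * h t / (p + t) ^ 2) (Ioi 0)) {y : ℝ} (hy : 0 < y) :
    HasDerivAt (opA (xiP p h)) (p * y * deriv h y / (p + y)) y := by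
  have hh : HasDerivAt h (deriv h y) y := (hd.differentiableAt (Ioi_mem_nhds hy)).hasDerivAt
  have hA := (((hasDerivAt_tailIntegral hp hd.continuousOn hf hy).add
    (((hasDerivAt_id' y).mul hh).div ((hasDerivAt_id' y).const_add p) (by positivity))).const_mul p)
  refine (hA.congr_of_eventuallyEq ?_).congr_deriv ?_
  · filter_upwards [Ioi_mem_nhds hy] with u hu
    exact opA_xiP_eq hp hd.continuousOn hf hu
  · simp only [Pi.mul_apply]
    field_simp
    ring

theorem opB_opA_xiP_eq (hp : 0 < p) (hd : DifferentiableOn ℝ h (Ioi 0))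
    (hf : IntegrableOn (fun t => p * h t / (p + t) ^ 2) (Ioi 0)) {y : ℝ} (hy : 0 < y) :
    opB p (opA (xiP p h)) y = (1 / p) * opA (xiP p h) y - y * deriv h y := by
  rw [opB, (hasDerivAt_opA_xiP hp hd hf hy).deriv]
  field_simp

theorem tendsto_opA_xiP (hp : 0 < p) (hc : ContinuousOn h (Ioi 0))
    (hf : IntegrableOn (fun t => p * h t / (p + t) ^ 2) (Ioi 0))
    (hyh : Tendsto (fun y => y * h y) (𝓝[>] 0) (𝓝 0)) :
    Tendsto (opA (xiP p h)) (𝓝[>] 0) (𝓝 (p * tailIntegral p h 0)) := by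
  have hden : Tendsto (fun y => p + y) (𝓝[>] 0) (𝓝 p) :=
    ((continuous_const_add p).tendsto' 0 p (add_zero p)).mono_left nhdsWithin_le_nhds
  have hlim := ((tendsto_setIntegral_Ioi_nhdsGT hf).add (hyh.div hden hp.ne')).const_mul p
  rw [zero_div, add_zero] at hlim
  refine hlim.congr' ?_
  filter_upwards [self_mem_nhdsWithin] with y hy
  exact (opA_xiP_eq hp hc hf hy).symm

theorem mul_div_add_le_of_antitoneOn (hp : 0 < p) (hnn : ∀ y > 0, 0 ≤ h y)
    (hdec : AntitoneOn h (Ioi 0)) (hint : IntegrableOn h (Ioo 0 1)) {y : ℝ} (hy : 0 < y) :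
    y * h y / (p + y) ≤ (∫ t in (0)..1, h t) / p + h 1 := by
  have hint' : IntervalIntegrable h volume 0 1 :=
    (intervalIntegrable_iff_integrableOn_Ioc_of_le zero_le_one).2
      ((integrableOn_Ioc_iff_integrableOn_Ioo).2 hint)
  have hsmall : ∀ y ∈ Ioc (0 : ℝ) 1, y * h y ≤ ∫ t in (0)..1, h t := fun y hy =>
    calc y * h y ≤ ∫ t in (0)..y, h t := by
          simpa using (hdec.mono Ioc_subset_Ioi_self).sub_mul_le_intervalIntegral
            (hint'.mono_set (by simpa [uIcc_of_le, hy.1.le] using Icc_subset_Icc_right hy.2)) hy.1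
      _ ≤ ∫ t in (0)..1, h t := intervalIntegral.integral_mono_interval le_rfl hy.1.le hy.2
            (ae_restrict_of_forall_mem measurableSet_Ioc fun t ht => hnn t ht.1) hint'
  have hy0 := hnn y hy
  have hI : 0 ≤ (∫ t in (0)..1, h t) / p := by
    have := hsmall 1 ⟨one_pos, le_rfl⟩
    have := hnn 1 one_pos
    apply div_nonneg _ hp.le
    nlinarith
  rcases le_or_gt y 1 with hy1 | hy1
  · calc y * h y / (p + y) ≤ y * h y / p := by gcongr; linarith
      _ ≤ (∫ t in (0)..1, h t) / p := by gcongr; exact hsmall y ⟨hy, hy1⟩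
      _ ≤ _ := by linarith [hnn 1 one_pos]
  · calc y * h y / (p + y) ≤ h y := by
          rw [div_le_iff₀ (by positivity)]; nlinarith
      _ ≤ h 1 := hdec (mem_Ioi.2 one_pos) hy hy1.le
      _ ≤ _ := by linarith

end Profile

theorem stmt_4_general (p : ℝ) (hp : 0 < p) (h : ℝ → ℝ)
    (hh1 : ContDiffOn ℝ 1 h (Set.Ioi 0))
    (hpos : ∀ y > (0:ℝ), 0 < h y)
    (hdec : AntitoneOn h (Set.Ioi 0))
    (hint : IntegrableOn h (Set.Ioo (0:ℝ) 1)) :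
    Tendsto (fun y => y * h y) (nhdsWithin 0 (Set.Ioi 0)) (nhds 0) ∧
    (∀ y > (0:ℝ), (1 / p) * opA (xiP p h) y
        = (∫ y' in Set.Ioi y, p * h y' / (p + y') ^ 2) + y * h y / (p + y)) ∧
    (∀ y > (0:ℝ), 0 < opA (xiP p h) y) ∧
    (∃ M, ∀ y > (0:ℝ), opA (xiP p h) y ≤ M) ∧
    (∃ L : ℝ, Tendsto (opA (xiP p h)) (nhdsWithin 0 (Set.Ioi 0)) (nhds L)) ∧
    (∀ y > (0:ℝ), opB p (opA (xiP p h)) y = (1 / p) * opA (xiP p h) y - y * deriv h y) ∧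
    (∀ y > (0:ℝ), 0 ≤ opB p (opA (xiP p h)) y) := by
  have hd : DifferentiableOn ℝ h (Ioi 0) := hh1.differentiableOn one_ne_zero
  have hnn : ∀ y > 0, 0 ≤ h y := fun y hy => (hpos y hy).le
  have hf := integrableOn_Ioi_tailIntegrand hp hd.continuousOn hnn hdec hint
  have hyh := hdec.tendsto_mul_nhdsGT_zero hnn hint
  have hA : ∀ y > 0, opA (xiP p h) y = p * (tailIntegral p h y + y * h y / (p + y)) :=
    fun y hy => opA_xiP_eq hp hd.continuousOn hf hy
  have hA_pos : ∀ y > 0, 0 < opA (xiP p h) y := fun y hy => by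
    have := tailIntegral_nonneg hp hnn hy.le
    have := hpos y hy
    rw [hA y hy]
    positivity
  have hB := fun y (hy : 0 < y) => opB_opA_xiP_eq hp hd hf hy
  refine ⟨hyh, fun y hy => ?_, hA_pos,
    ⟨p * (tailIntegral p h 0 + (∫ t in (0)..1, h t) / p + h 1), fun y hy => ?_⟩,
    ⟨_, tendsto_opA_xiP hp hd.continuousOn hf hyh⟩, hB, fun y hy => ?_⟩
  · rw [hA y hy, ← mul_assoc, one_div_mul_cancel hp.ne', one_mul]
    rfl
  · rw [hA y hy, add_assoc]
    gcongr
    exacts [tailIntegral_le_tailIntegral_zero hp hnn hf hy.le,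
      mul_div_add_le_of_antitoneOn hp hnn hdec hint hy]
  · have hyh' : y * deriv h y ≤ 0 :=
      mul_nonpos_of_nonneg_of_nonpos hy.le (hdec.deriv_nonpos_of_mem_nhds (Ioi_mem_nhds hy))
    have := hA_pos y hy
    rw [hB y hy, sub_nonneg]
    exact hyh'.trans (by positivity)

/-- basic properties of Aξ_p and B(Aξ_p). -/
theorem stmt_4 (p hinf : ℝ) (hp : 0 < p) (h : ℝ → ℝ)
    (hh1 : ContDiffOn ℝ 1 h (Set.Ioi 0))
    (hpos : ∀ y > (0:ℝ), 0 < h y)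
    (hdec : AntitoneOn h (Set.Ioi 0))
    (hint : IntegrableOn h (Set.Ioo (0:ℝ) 1))
    (hlim : Tendsto h atTop (nhds hinf)) :
    Tendsto (fun y => y * h y) (nhdsWithin 0 (Set.Ioi 0)) (nhds 0) ∧
    (∀ y > (0:ℝ), (1 / p) * opA (xiP p h) y
        = (∫ y' in Set.Ioi y, p * h y' / (p + y') ^ 2) + y * h y / (p + y)) ∧
    (∀ y > (0:ℝ), 0 < opA (xiP p h) y) ∧
    (∃ M, ∀ y > (0:ℝ), opA (xiP p h) y ≤ M) ∧
    (∃ L : ℝ, Tendsto (opA (xiP p h)) (nhdsWithin 0 (Set.Ioi 0)) (nhds L)) ∧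
    (∀ y > (0:ℝ), opB p (opA (xiP p h)) y = (1 / p) * opA (xiP p h) y - y * deriv h y) ∧
    (∀ y > (0:ℝ), 0 ≤ opB p (opA (xiP p h)) y) :=
  stmt_4_general p hp h hh1 hpos hdec hint
end

section
/- (Lemma 7.2.) Let p > 0, T ∈ ℝ, y > 0. Let g : (0,∞) → [0,∞) be C¹ and decreasing with z ↦ −z g'(z) decreasing and g' < 0 somewhere; set z_∞ = sup{z > 0 : g'(z) < 0}, fix z₀ ∈ (0, z_∞), and let F(z) = −z log(−g'(z)) + ∫_{z₀}^z log(−g'(z')) dz' on (0, z_∞). Let x_p(s) = e^{(T−s)/p}(y + p) − p and λ_∞ = min(z_∞, y). For 0 < λ < λ_∞ and s ≤ T let z_p(s,λ) be the unique solution in (0, z_∞) of F(z_p(s,λ)) = F(λ) + T − s, and define y_p(s,λ) = y · exp[∫_s^T (1/p + 1/z_p(s',λ)) ds']. Then: (i) for all 0 < λ < λ_∞ and s < T, y_p(s,λ) > x_p(s), i.e. the trajectories y_p(·,λ) lie in the reachable set; (ii) for 0 < λ₁ < λ₂ < λ_∞ and s < T, y_p(s,λ₁) ≠ y_p(s,λ₂),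 i.e. the trajectories do not intersect. Moreover, if z_∞ < ∞ and z_∞ > y, let T_∞ < T be the unique solution of x_p(T_∞) = z_∞; for T_∞ < t < T and s ≤ t let z̃_p(s,t) be the unique solution in (0, z_∞) of F(z̃_p(s,t)) = F(x_p(t)) + t − s, and define x_p(s,t) = x_p(t) · exp[∫_s^t (1/p + 1/z̃_p(s',t)) ds']. Then x_p(s,t) > x_p(s) for all s < t, and for T_∞ < t₁ < t₂ < T and s < t₁ one has x_p(s,t₂) > x_p(s,t₁). -/
/-!
With `h(z) = log (-z g'(z))`, which is antitone on `{g' < 0}`, one has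
`F(b) - F(a) - (b - a) = ∫_a^b h - (b h(b) - a h(a)) ≥ a (h(a) - h(b)) ≥ 0`, so `F - id` is
monotone there. Along a level curve `F(z(s)) = F(λ) + (t - s)` this gives
`λ ≤ z(s) ≤ λ + (t - s)`, and curves starting higher stay strictly higher. The affine majorant
yields `Y e^{∫ (1/p + 1/z)} ≥ Y e^{u/p} (λ + u)/λ ≥ (Y + u) e^{u/p}` with `u = t - s`, which beats
`x_p(s) = Y e^{u/p} + p (e^{u/p} - 1)` because `p (e^{u/p} - 1) < u e^{u/p}`. For the family
`x_p(·, t)` one restarts `x_p` at time `t`; since `x_p` falls with slope at most `-1`,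
`F(x_p(t₂)) + t₂ ≤ F(x_p(t₁)) + t₁` for `t₁ < t₂`, so the later curve lies lower before `t₁`
and its integrand is larger.
-/

open MeasureTheory Real Filter Set

/-- The function F(z) = −z log(−g'(z)) + ∫_{z₀}^z log(−g'(z')) dz'. -/
noncomputable def Fg (g : ℝ → ℝ) (z₀ z : ℝ) : ℝ :=
  -z * Real.log (-deriv g z) + ∫ z' in z₀..z, Real.log (-deriv g z')

/-- The free trajectory x_p(s) = e^{(T−s)/p}(y+p) − p. -/
noncomputable def xpTraj (p y T s : ℝ) : ℝ := Real.exp ((T - s) / p) * (y + p) - p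

lemma Real.exp_sub_one_lt_mul_exp {x : ℝ} (hx : x ≠ 0) : exp x - 1 < x * exp x := by
  have h := mul_lt_mul_of_pos_right (add_one_lt_exp (neg_ne_zero.2 hx)) (exp_pos x)
  rw [← exp_add, neg_add_cancel, exp_zero] at h
  linarith

lemma mul_sub_mul_le_integral_of_antitoneOn {h : ℝ → ℝ} {a b : ℝ} (ha : 0 ≤ a) (hab : a ≤ b)
    (hh : AntitoneOn h (Icc a b)) : b * h b - a * h a ≤ ∫ x in a..b, h x := by
  have hb : b ∈ Icc a b := ⟨hab, le_rfl⟩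
  have hint : IntervalIntegrable h volume a b := by
    rw [← uIcc_of_le hab] at hh
    exact hh.intervalIntegrable
  have hconst : (b - a) * h b ≤ ∫ x in a..b, h x := by
    simpa using intervalIntegral.integral_mono_on hab intervalIntegrable_const hint
      (fun x hx => hh hx hb hx.2)
  have : a * h b ≤ a * h a := mul_le_mul_of_nonneg_left (hh ⟨le_rfl, hab⟩ hb hab) ha
  linarith

lemma strictMonoOn_of_monotoneOn_sub_id {F : ℝ → ℝ} {S : Set ℝ}
    (hF : MonotoneOn (fun x => F x - x) S) : StrictMonoOn F S := by
  simpa using hF.add_strictMono (strictMono_id.strictMonoOn S)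

section NegDeriv

variable {g : ℝ → ℝ}

lemma deriv_neg_of_le (hzg : AntitoneOn (fun z => -(z * deriv g z)) (Ioi 0)) {a b : ℝ}
    (ha : 0 < a) (hab : a ≤ b) (hb : deriv g b < 0) : deriv g a < 0 := by
  have hb₀ : 0 < b := ha.trans_le hab
  have h : -(b * deriv g b) ≤ -(a * deriv g a) := hzg ha hb₀ hab
  exact neg_of_mul_neg_right (by nlinarith [mul_neg_of_pos_of_neg hb₀ hb]) ha.le

lemma ordConnected_setOf_deriv_neg (hzg : AntitoneOn (fun z => -(z * deriv g z)) (Ioi 0)) :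
    OrdConnected {z | 0 < z ∧ deriv g z < 0} :=
  ⟨fun _ ha _ hb _ hz => ⟨ha.1.trans_le hz.1, deriv_neg_of_le hzg (ha.1.trans_le hz.1) hz.2 hb.2⟩⟩

lemma mem_setOf_deriv_neg_of_lt_isLUB (hzg : AntitoneOn (fun z => -(z * deriv g z)) (Ioi 0))
    {zinf x : ℝ} (hlub : IsLUB {z | 0 < z ∧ deriv g z < 0} zinf) (hx : 0 < x) (hxz : x < zinf) :
    x ∈ {z | 0 < z ∧ deriv g z < 0} := by
  obtain ⟨c, hc, hxc⟩ := (lt_isLUB_iff hlub).1 hxz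
  exact ⟨hx, deriv_neg_of_le hzg hx hxc.le hc.2⟩

lemma antitoneOn_log_neg_deriv (hzg : AntitoneOn (fun z => -(z * deriv g z)) (Ioi 0)) :
    AntitoneOn (fun z => log (-deriv g z)) {z | 0 < z ∧ deriv g z < 0} := by
  intro a ha b hb hab
  have h : -(b * deriv g b) ≤ -(a * deriv g a) := hzg ha.1 hb.1 hab
  refine log_le_log (neg_pos.2 hb.2) (le_of_mul_le_mul_left ?_ hb.1)
  nlinarith [ha.2]

lemma antitoneOn_log_add_log_neg_deriv (hzg : AntitoneOn (fun z => -(z * deriv g z)) (Ioi 0)) :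
    AntitoneOn (fun z => log z + log (-deriv g z)) {z | 0 < z ∧ deriv g z < 0} := by
  intro a ha b hb hab
  have h : -(b * deriv g b) ≤ -(a * deriv g a) := hzg ha.1 hb.1 hab
  simp only
  rw [← log_mul hb.1.ne' (neg_pos.2 hb.2).ne', ← log_mul ha.1.ne' (neg_pos.2 ha.2).ne']
  exact log_le_log (mul_pos hb.1 (neg_pos.2 hb.2)) (by linarith)

lemma monotoneOn_Fg_sub_id (hzg : AntitoneOn (fun z => -(z * deriv g z)) (Ioi 0)) {z₀ : ℝ}
    (hz₀ : z₀ ∈ {z | 0 < z ∧ deriv g z < 0}) :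
    MonotoneOn (fun z => Fg g z₀ z - z) {z | 0 < z ∧ deriv g z < 0} := by
  intro a ha b hb hab
  set L : ℝ → ℝ := fun z => log (-deriv g z)
  have hS := ordConnected_setOf_deriv_neg hzg
  have hL : ∀ c ∈ {z | 0 < z ∧ deriv g z < 0}, IntervalIntegrable L volume z₀ c := fun c hc =>
    ((antitoneOn_log_neg_deriv hzg).mono (hS.uIcc_subset hz₀ hc)).intervalIntegrable
  have hsplit : (∫ z in z₀..b, L z) - ∫ z in z₀..a, L z = ∫ z in a..b, L z :=
    intervalIntegral.integral_interval_sub_left (hL b hb) (hL a ha)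
  have hh : AntitoneOn (fun z => log z + L z) (Icc a b) :=
    (antitoneOn_log_add_log_neg_deriv hzg).mono (hS.out ha hb)
  have hhint : IntervalIntegrable (fun z => log z + L z) volume a b := by
    rw [← uIcc_of_le hab] at hh
    exact hh.intervalIntegrable
  have hLh : ∫ z in a..b, L z = (∫ z in a..b, (log z + L z)) - ∫ z in a..b, log z := by
    rw [← intervalIntegral.integral_sub hhint intervalIntegral.intervalIntegrable_log']
    simp only [add_sub_cancel_left]
  have hlow := mul_sub_mul_le_integral_of_antitoneOn ha.1.le hab hh
  have hFb : Fg g z₀ b = -b * L b + ∫ z in z₀..b, L z := rfl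
  have hFa : Fg g z₀ a = -a * L a + ∫ z in z₀..a, L z := rfl
  simp only
  rw [integral_log] at hLh
  linarith

end NegDeriv

section Integrals

variable {p t₀ : ℝ}

lemma intervalIntegrable_one_div_of_antitoneOn {z : ℝ → ℝ} (hz : AntitoneOn z (Iic t₀))
    (hpos : ∀ s ≤ t₀, 0 < z s) {a b : ℝ} (ha : a ≤ t₀) (hb : b ≤ t₀) :
    IntervalIntegrable (fun s => 1 / z s) volume a b := by
  have hsub : uIcc a b ⊆ Iic t₀ := fun x hx => hx.2.trans (max_le ha hb)
  refine MonotoneOn.intervalIntegrable fun x hx y hy hxy => ?_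
  exact one_div_le_one_div_of_le (hpos y (hsub hy)) (hz (hsub hx) (hsub hy) hxy)

lemma integral_const_add_one_div_le_of_le {z₁ z₂ : ℝ → ℝ} (hz₁ : AntitoneOn z₁ (Iic t₀))
    (hz₂ : AntitoneOn z₂ (Iic t₀)) (hpos : ∀ s ≤ t₀, 0 < z₁ s) (hle : ∀ s ≤ t₀, z₁ s ≤ z₂ s)
    {s : ℝ} (hs : s ≤ t₀) :
    ∫ s' in s..t₀, (1 / p + 1 / z₂ s') ≤ ∫ s' in s..t₀, (1 / p + 1 / z₁ s') := by
  have hpos₂ : ∀ s ≤ t₀, 0 < z₂ s := fun s hs => (hpos s hs).trans_le (hle s hs)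
  refine intervalIntegral.integral_mono_on hs
    (intervalIntegrable_const.add (intervalIntegrable_one_div_of_antitoneOn hz₂ hpos₂ hs le_rfl))
    (intervalIntegrable_const.add (intervalIntegrable_one_div_of_antitoneOn hz₁ hpos hs le_rfl))
    fun x hx => ?_
  gcongr
  exacts [hpos x hx.2, hle x hx.2]

lemma integral_const_add_one_div_lt_of_lt {z₁ z₂ : ℝ → ℝ} (hz₁ : AntitoneOn z₁ (Iic t₀))
    (hz₂ : AntitoneOn z₂ (Iic t₀)) (hpos : ∀ s ≤ t₀, 0 < z₁ s) (hlt : ∀ s ≤ t₀, z₁ s < z₂ s)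
    {s : ℝ} (hs : s < t₀) :
    ∫ s' in s..t₀, (1 / p + 1 / z₂ s') < ∫ s' in s..t₀, (1 / p + 1 / z₁ s') := by
  have hpos₂ : ∀ s ≤ t₀, 0 < z₂ s := fun s hs => (hpos s hs).trans (hlt s hs)
  have hint₁ := intervalIntegrable_const (c := 1 / p).add
    (intervalIntegrable_one_div_of_antitoneOn hz₁ hpos hs.le le_rfl)
  have hint₂ := intervalIntegrable_const (c := 1 / p).add
    (intervalIntegrable_one_div_of_antitoneOn hz₂ hpos₂ hs.le le_rfl)
  have hdiff := intervalIntegral.intervalIntegral_pos_of_pos_on (hint₁.sub hint₂)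
    (fun x hx => sub_pos.2 (add_lt_add_right
      (one_div_lt_one_div_of_lt (hpos x hx.2.le) (hlt x hx.2.le)) _)) hs
  rw [intervalIntegral.integral_sub hint₁ hint₂] at hdiff
  linarith

lemma integral_const_add_one_div_affine {Λ s : ℝ} (hΛ : 0 < Λ) (hs : s ≤ t₀) :
    ∫ s' in s..t₀, (1 / p + 1 / (Λ + (t₀ - s'))) = (t₀ - s) / p + log ((Λ + (t₀ - s)) / Λ) := by
  have hanti : AntitoneOn (fun s' => Λ + (t₀ - s')) (Iic t₀) := fun _ _ _ _ h => by linarith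
  have hint := intervalIntegrable_one_div_of_antitoneOn hanti (fun _ _ => by linarith) hs le_rfl
  have hinv : ∫ s' in s..t₀, 1 / (Λ + (t₀ - s')) = log ((Λ + (t₀ - s)) / Λ) := by
    calc ∫ s' in s..t₀, 1 / (Λ + (t₀ - s'))
        = ∫ s' in s..t₀, (fun x => 1 / x) (Λ + t₀ - s') := by simp only [add_sub_assoc]
      _ = ∫ x in Λ + t₀ - t₀..Λ + t₀ - s, 1 / x := intervalIntegral.integral_comp_sub_left _ _
      _ = log ((Λ + (t₀ - s)) / Λ) := by
        rw [add_sub_cancel_right, add_sub_assoc, integral_one_div_of_pos hΛ (by linarith)]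
  rw [intervalIntegral.integral_add intervalIntegrable_const hint, intervalIntegral.integral_const,
    hinv, smul_eq_mul]
  ring

end Integrals

lemma xpTraj_xpTraj (p y T t s : ℝ) : xpTraj p (xpTraj p y T t) t s = xpTraj p y T s := by
  simp only [xpTraj, sub_add_cancel, ← mul_assoc, ← exp_add]
  ring_nf

lemma add_sub_le_xpTraj {p Y t₀ s : ℝ} (hp : 0 < p) (hY : 0 ≤ Y) (hs : s ≤ t₀) :
    Y + (t₀ - s) ≤ xpTraj p Y t₀ s := by
  have hexp := mul_le_mul_of_nonneg_right (add_one_le_exp ((t₀ - s) / p)) (by linarith : 0 ≤ Y + p)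
  have hlin : t₀ - s ≤ (t₀ - s) / p * (Y + p) := by
    rw [div_mul_eq_mul_div, le_div_iff₀ hp]
    nlinarith
  unfold xpTraj
  linarith

lemma xpTraj_lt_mul_exp_integral {p Y Λ t₀ s : ℝ} {z : ℝ → ℝ} (hp : 0 < p) (hΛ : 0 < Λ)
    (hΛY : Λ ≤ Y) (hs : s < t₀) (hz : AntitoneOn z (Iic t₀)) (hlow : ∀ s' ≤ t₀, Λ ≤ z s')
    (hupp : ∀ s' ≤ t₀, z s' ≤ Λ + (t₀ - s')) :
    xpTraj p Y t₀ s < Y * exp (∫ s' in s..t₀, (1 / p + 1 / z s')) := by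
  set u := t₀ - s with hu_def
  have hu : 0 < u := sub_pos.2 hs
  have hint : u / p + log ((Λ + u) / Λ) ≤ ∫ s' in s..t₀, (1 / p + 1 / z s') := by
    rw [← integral_const_add_one_div_affine hΛ hs.le]
    exact integral_const_add_one_div_le_of_le hz (fun _ _ _ _ h => by linarith)
      (fun s' hs' => hΛ.trans_le (hlow s' hs')) hupp hs.le
  have hexp : exp (u / p) * ((Λ + u) / Λ) ≤ exp (∫ s' in s..t₀, (1 / p + 1 / z s')) := by
    rw [← exp_log (by positivity : 0 < (Λ + u) / Λ), ← exp_add]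
    exact exp_le_exp.2 hint
  have hratio : Y + u ≤ Y * ((Λ + u) / Λ) := by
    rw [mul_div_assoc', le_div_iff₀ hΛ]
    nlinarith
  have hkey : p * (exp (u / p) - 1) < u * exp (u / p) := by
    have := mul_lt_mul_of_pos_left (exp_sub_one_lt_mul_exp (div_pos hu hp).ne') hp
    rwa [← mul_assoc, mul_div_cancel₀ _ hp.ne'] at this
  have hE := exp_pos (u / p)
  calc xpTraj p Y t₀ s = Y * exp (u / p) + p * (exp (u / p) - 1) := by unfold xpTraj; ring
    _ < (Y + u) * exp (u / p) := by linarith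
    _ ≤ Y * ((Λ + u) / Λ) * exp (u / p) := by gcongr
    _ ≤ Y * exp (∫ s' in s..t₀, (1 / p + 1 / z s')) := by
      rw [mul_assoc, mul_comm _ (exp _)]
      gcongr
      linarith

def IsLevelCurve (F : ℝ → ℝ) (S : Set ℝ) (Λ t₀ : ℝ) (z : ℝ → ℝ) : Prop :=
  ∀ s ≤ t₀, z s ∈ S ∧ F (z s) = F Λ + (t₀ - s)

namespace IsLevelCurve

variable {F : ℝ → ℝ} {S : Set ℝ} {Λ t₀ : ℝ} {z : ℝ → ℝ}

lemma apply_le_apply (hF : MonotoneOn (fun x => F x - x) S) {Λ₁ Λ₂ t₁ t₂ s₁ s₂ : ℝ}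
    {z₁ z₂ : ℝ → ℝ} (h₁ : IsLevelCurve F S Λ₁ t₁ z₁) (h₂ : IsLevelCurve F S Λ₂ t₂ z₂)
    (hs₁ : s₁ ≤ t₁) (hs₂ : s₂ ≤ t₂) (h : F Λ₁ + (t₁ - s₁) ≤ F Λ₂ + (t₂ - s₂)) :
    z₁ s₁ ≤ z₂ s₂ := by
  rw [← (strictMonoOn_of_monotoneOn_sub_id hF).le_iff_le (h₁ s₁ hs₁).1 (h₂ s₂ hs₂).1,
    (h₁ s₁ hs₁).2, (h₂ s₂ hs₂).2]
  exact h

lemma apply_lt_apply (hF : MonotoneOn (fun x => F x - x) S) {Λ₁ Λ₂ t₁ t₂ s₁ s₂ : ℝ}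
    {z₁ z₂ : ℝ → ℝ} (h₁ : IsLevelCurve F S Λ₁ t₁ z₁) (h₂ : IsLevelCurve F S Λ₂ t₂ z₂)
    (hs₁ : s₁ ≤ t₁) (hs₂ : s₂ ≤ t₂) (h : F Λ₁ + (t₁ - s₁) < F Λ₂ + (t₂ - s₂)) :
    z₁ s₁ < z₂ s₂ := by
  rw [← (strictMonoOn_of_monotoneOn_sub_id hF).lt_iff_lt (h₁ s₁ hs₁).1 (h₂ s₂ hs₂).1,
    (h₁ s₁ hs₁).2, (h₂ s₂ hs₂).2]
  exact h

lemma antitoneOn (hF : MonotoneOn (fun x => F x - x) S) (hz : IsLevelCurve F S Λ t₀ z) :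
    AntitoneOn z (Iic t₀) :=
  fun _ ha _ hb hab => apply_le_apply hF hz hz hb ha (by linarith)

lemma le_apply (hF : MonotoneOn (fun x => F x - x) S) (hz : IsLevelCurve F S Λ t₀ z)
    (hΛ : Λ ∈ S) {s : ℝ} (hs : s ≤ t₀) : Λ ≤ z s := by
  rw [← (strictMonoOn_of_monotoneOn_sub_id hF).le_iff_le hΛ (hz s hs).1, (hz s hs).2]
  linarith

lemma apply_le_add (hF : MonotoneOn (fun x => F x - x) S) (hz : IsLevelCurve F S Λ t₀ z)
    (hΛ : Λ ∈ S) {s : ℝ} (hs : s ≤ t₀) : z s ≤ Λ + (t₀ - s) := by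
  have := hF hΛ (hz s hs).1 (hz.le_apply hF hΛ hs)
  simp only [(hz s hs).2] at this
  linarith

lemma xpTraj_lt_mul_exp_integral (hF : MonotoneOn (fun x => F x - x) S)
    (hz : IsLevelCurve F S Λ t₀ z) (hΛS : Λ ∈ S) {p Y s : ℝ} (hp : 0 < p) (hΛ : 0 < Λ)
    (hΛY : Λ ≤ Y) (hs : s < t₀) :
    xpTraj p Y t₀ s < Y * exp (∫ s' in s..t₀, (1 / p + 1 / z s')) :=
  _root_.xpTraj_lt_mul_exp_integral hp hΛ hΛY hs (hz.antitoneOn hF)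
    (fun _ => hz.le_apply hF hΛS) (fun _ => hz.apply_le_add hF hΛS)

lemma integral_lt_integral (hF : MonotoneOn (fun x => F x - x) S) {Λ₁ Λ₂ : ℝ}
    {z₁ z₂ : ℝ → ℝ} (h₁ : IsLevelCurve F S Λ₁ t₀ z₁) (h₂ : IsLevelCurve F S Λ₂ t₀ z₂)
    (hΛ₁S : Λ₁ ∈ S) (hΛ₂S : Λ₂ ∈ S) (hΛ₁ : 0 < Λ₁) (hΛ : Λ₁ < Λ₂) {p s : ℝ} (hs : s < t₀) :
    ∫ s' in s..t₀, (1 / p + 1 / z₂ s') < ∫ s' in s..t₀, (1 / p + 1 / z₁ s') := by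
  have hF₁₂ : F Λ₁ < F Λ₂ := strictMonoOn_of_monotoneOn_sub_id hF hΛ₁S hΛ₂S hΛ
  exact integral_const_add_one_div_lt_of_lt (h₁.antitoneOn hF) (h₂.antitoneOn hF)
    (fun s' hs' => hΛ₁.trans_le (h₁.le_apply hF hΛ₁S hs'))
    (fun s' hs' => apply_lt_apply hF h₁ h₂ hs' hs' (by linarith)) hs

lemma mul_exp_integral_lt (hF : MonotoneOn (fun x => F x - x) S) {Λ₁ Λ₂ t₁ t₂ : ℝ}
    {z₁ z₂ : ℝ → ℝ} (h₁ : IsLevelCurve F S Λ₁ t₁ z₁) (h₂ : IsLevelCurve F S Λ₂ t₂ z₂)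
    (hΛ₂S : Λ₂ ∈ S) (hΛ₁ : 0 < Λ₁) (hΛ₂ : 0 < Λ₂) (hF₁₂ : F Λ₂ + t₂ ≤ F Λ₁ + t₁)
    {p s : ℝ} (hjoin : Λ₁ < Λ₂ * exp (∫ s' in t₁..t₂, (1 / p + 1 / z₂ s')))
    (hs : s ≤ t₁) (ht : t₁ ≤ t₂) :
    Λ₁ * exp (∫ s' in s..t₁, (1 / p + 1 / z₁ s')) <
      Λ₂ * exp (∫ s' in s..t₂, (1 / p + 1 / z₂ s')) := by
  have hz₂ := h₂.antitoneOn hF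
  have hpos₂ : ∀ s' ≤ t₂, 0 < z₂ s' := fun s' hs' => hΛ₂.trans_le (h₂.le_apply hF hΛ₂S hs')
  have hint₂ : ∀ {a b}, a ≤ t₂ → b ≤ t₂ →
      IntervalIntegrable (fun s' => 1 / p + 1 / z₂ s') volume a b := fun ha hb =>
    intervalIntegrable_const.add (intervalIntegrable_one_div_of_antitoneOn hz₂ hpos₂ ha hb)
  have hle : ∫ s' in s..t₁, (1 / p + 1 / z₁ s') ≤ ∫ s' in s..t₁, (1 / p + 1 / z₂ s') :=
    integral_const_add_one_div_le_of_le (hz₂.mono (Iic_subset_Iic.2 ht)) (h₁.antitoneOn hF)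
      (fun s' hs' => hpos₂ s' (hs'.trans ht))
      (fun s' hs' => apply_le_apply hF h₂ h₁ (hs'.trans ht) hs' (by linarith)) hs
  have hsplit := intervalIntegral.integral_add_adjacent_intervals
    (hint₂ (hs.trans ht) ht) (hint₂ ht le_rfl)
  calc Λ₁ * exp (∫ s' in s..t₁, (1 / p + 1 / z₁ s'))
      ≤ Λ₁ * exp (∫ s' in s..t₁, (1 / p + 1 / z₂ s')) := by gcongr
    _ < Λ₂ * exp (∫ s' in t₁..t₂, (1 / p + 1 / z₂ s')) *
          exp (∫ s' in s..t₁, (1 / p + 1 / z₂ s')) := by gcongr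
    _ = Λ₂ * exp (∫ s' in s..t₂, (1 / p + 1 / z₂ s')) := by rw [← hsplit, exp_add]; ring

end IsLevelCurve

/-- Membership `λ ∈ (0, z_∞)` is expressed by `deriv g λ < 0`, since `(0, z_∞) = {g' < 0}`. -/
theorem stmt_14_general (p T y z₀ : ℝ) (hp : 0 < p) (hy : 0 < y) (g : ℝ → ℝ)
    (hzg : AntitoneOn (fun z => -(z * deriv g z)) (Set.Ioi 0))
    (hz₀pos : 0 < z₀) (hz₀ : deriv g z₀ < 0)
    (zp : ℝ → ℝ → ℝ)
    (hzp : ∀ lam : ℝ, 0 < lam → lam < y → deriv g lam < 0 → ∀ s ≤ T,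
      0 < zp s lam ∧ deriv g (zp s lam) < 0 ∧ Fg g z₀ (zp s lam) = Fg g z₀ lam + (T - s))
    (yp : ℝ → ℝ → ℝ)
    (hyp : ∀ lam s : ℝ,
      yp s lam = y * Real.exp (∫ s' in s..T, (1 / p + 1 / zp s' lam))) :
    ((∀ lam : ℝ, 0 < lam → lam < y → deriv g lam < 0 →
        ∀ s < T, xpTraj p y T s < yp s lam) ∧
     (∀ lam₁ lam₂ : ℝ, 0 < lam₁ → lam₁ < y → deriv g lam₁ < 0 →
        0 < lam₂ → lam₂ < y → deriv g lam₂ < 0 → lam₁ < lam₂ →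
        ∀ s < T, yp s lam₁ ≠ yp s lam₂)) ∧
    (∀ zinf Tinf : ℝ, IsLUB {z : ℝ | 0 < z ∧ deriv g z < 0} zinf →
      y < zinf → Tinf < T → xpTraj p y T Tinf = zinf →
      ∀ ztp : ℝ → ℝ → ℝ,
        (∀ t : ℝ, Tinf < t → t < T → ∀ s ≤ t,
          0 < ztp s t ∧ deriv g (ztp s t) < 0 ∧
            Fg g z₀ (ztp s t) = Fg g z₀ (xpTraj p y T t) + (t - s)) →
        ∀ xpt : ℝ → ℝ → ℝ,
          (∀ t s : ℝ, xpt s t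
            = xpTraj p y T t * Real.exp (∫ s' in s..t, (1 / p + 1 / ztp s' t))) →
          (∀ t : ℝ, Tinf < t → t < T → ∀ s < t, xpTraj p y T s < xpt s t) ∧
          (∀ t₁ t₂ : ℝ, Tinf < t₁ → t₁ < t₂ → t₂ < T →
            ∀ s < t₁, xpt s t₁ < xpt s t₂)) := by
  have hF := monotoneOn_Fg_sub_id hzg ⟨hz₀pos, hz₀⟩
  have hcurve : ∀ lam, 0 < lam → lam < y → deriv g lam < 0 → IsLevelCurve (Fg g z₀)
      {z | 0 < z ∧ deriv g z < 0} lam T (fun s => zp s lam) :=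
    fun lam h₀ hy' hg s hs => and_assoc.2 (hzp lam h₀ hy' hg s hs)
  refine ⟨⟨fun lam h₀ hy' hg s hs => ?_, fun lam₁ lam₂ h₁ hy₁ hg₁ h₂ hy₂ hg₂ h₁₂ s hs => ?_⟩, ?_⟩
  · rw [hyp]
    exact (hcurve lam h₀ hy' hg).xpTraj_lt_mul_exp_integral hF ⟨h₀, hg⟩ hp h₀ hy'.le hs
  · rw [hyp, hyp]
    exact (mul_lt_mul_of_pos_left (exp_lt_exp.2 ((hcurve lam₁ h₁ hy₁ hg₁).integral_lt_integral hF
      (hcurve lam₂ h₂ hy₂ hg₂) ⟨h₁, hg₁⟩ ⟨h₂, hg₂⟩ h₁ h₁₂ hs)) hy).ne'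
  intro zinf Tinf hlub hyz hTinf hxTinf ztp hztp xpt hxpt
  have hxS : ∀ t, Tinf < t → t < T → xpTraj p y T t ∈ {z | 0 < z ∧ deriv g z < 0} := by
    intro t h₁ h₂
    have hyx := add_sub_le_xpTraj hp hy.le h₂.le
    have hxz := add_sub_le_xpTraj hp (hy.le.trans (by linarith) : 0 ≤ xpTraj p y T t) h₁.le
    rw [xpTraj_xpTraj, hxTinf] at hxz
    exact mem_setOf_deriv_neg_of_lt_isLUB hzg hlub (by linarith) (by linarith)
  have hcurve' : ∀ t (h₁ : Tinf < t) (h₂ : t < T), IsLevelCurve (Fg g z₀)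
      {z | 0 < z ∧ deriv g z < 0} (xpTraj p y T t) t (fun s => ztp s t) :=
    fun t h₁ h₂ s hs => and_assoc.2 (hztp t h₁ h₂ s hs)
  have hbelow : ∀ t, Tinf < t → t < T → ∀ s < t, xpTraj p y T s < xpt s t := by
    intro t h₁ h₂ s hs
    rw [hxpt, ← xpTraj_xpTraj p y T t s]
    exact (hcurve' t h₁ h₂).xpTraj_lt_mul_exp_integral hF (hxS t h₁ h₂) hp (hxS t h₁ h₂).1 le_rfl hs
  refine ⟨hbelow, fun t₁ t₂ h₁ h₁₂ h₂ s hs => ?_⟩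
  have hS₁ := hxS t₁ h₁ (h₁₂.trans h₂)
  have hS₂ := hxS t₂ (h₁.trans h₁₂) h₂
  have hgap := add_sub_le_xpTraj hp hS₂.1.le h₁₂.le
  rw [xpTraj_xpTraj] at hgap
  have hFgap := hF hS₂ hS₁ (by linarith)
  have hjoin := hbelow t₂ (h₁.trans h₁₂) h₂ t₁ h₁₂
  rw [hxpt] at hjoin
  rw [hxpt, hxpt]
  exact (hcurve' t₁ h₁ (h₁₂.trans h₂)).mul_exp_integral_lt hF (hcurve' t₂ (h₁.trans h₁₂) h₂)
    hS₂ hS₁.1 hS₂.1 (by simp only at hFgap; linarith) hjoin hs.le h₁₂.le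

/-- Lemma 7.2: the trajectories y_p(·,λ) (and, when z_∞ < ∞, the
trajectories x_p(·,t)) lie in the reachable set {x > x_p(s)} and do not intersect.
Membership λ ∈ (0, z_∞) is expressed by deriv g λ < 0, since (0, z_∞) = {g' < 0}. -/
theorem stmt_14 (p T y z₀ : ℝ) (hp : 0 < p) (hy : 0 < y) (g : ℝ → ℝ)
    (hg1 : ContDiffOn ℝ 1 g (Set.Ioi 0))
    (hgnonneg : ∀ z > (0:ℝ), 0 ≤ g z)
    (hgdec : AntitoneOn g (Set.Ioi 0))
    (hzg : AntitoneOn (fun z => -(z * deriv g z)) (Set.Ioi 0))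
    (hsome : ∃ z > (0:ℝ), deriv g z < 0)
    (hz₀pos : 0 < z₀) (hz₀ : deriv g z₀ < 0)
    (zp : ℝ → ℝ → ℝ)
    (hzp : ∀ lam : ℝ, 0 < lam → lam < y → deriv g lam < 0 → ∀ s ≤ T,
      0 < zp s lam ∧ deriv g (zp s lam) < 0 ∧ Fg g z₀ (zp s lam) = Fg g z₀ lam + (T - s))
    (yp : ℝ → ℝ → ℝ)
    (hyp : ∀ lam s : ℝ,
      yp s lam = y * Real.exp (∫ s' in s..T, (1 / p + 1 / zp s' lam))) :
    ((∀ lam : ℝ, 0 < lam → lam < y → deriv g lam < 0 →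
        ∀ s < T, xpTraj p y T s < yp s lam) ∧
     (∀ lam₁ lam₂ : ℝ, 0 < lam₁ → lam₁ < y → deriv g lam₁ < 0 →
        0 < lam₂ → lam₂ < y → deriv g lam₂ < 0 → lam₁ < lam₂ →
        ∀ s < T, yp s lam₁ ≠ yp s lam₂)) ∧
    (∀ zinf Tinf : ℝ, IsLUB {z : ℝ | 0 < z ∧ deriv g z < 0} zinf →
      y < zinf → Tinf < T → xpTraj p y T Tinf = zinf →
      ∀ ztp : ℝ → ℝ → ℝ,
        (∀ t : ℝ, Tinf < t → t < T → ∀ s ≤ t,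
          0 < ztp s t ∧ deriv g (ztp s t) < 0 ∧
            Fg g z₀ (ztp s t) = Fg g z₀ (xpTraj p y T t) + (t - s)) →
        ∀ xpt : ℝ → ℝ → ℝ,
          (∀ t s : ℝ, xpt s t
            = xpTraj p y T t * Real.exp (∫ s' in s..t, (1 / p + 1 / ztp s' t))) →
          (∀ t : ℝ, Tinf < t → t < T → ∀ s < t, xpTraj p y T s < xpt s t) ∧
          (∀ t₁ t₂ : ℝ, Tinf < t₁ → t₁ < t₂ → t₂ < T →
            ∀ s < t₁, xpt s t₁ < xpt s t₂)) :=
  stmt_14_general p T y z₀ hp hy g hzg hz₀pos hz₀ zp hzp yp hyp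
end
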